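/- arXiv:1301.7450 — 3 statements merged into one kernel-verified Lean document; each statement's English description precedes it below -/
import Mathlib

section
/- Theorem (ratio of partition functions as a determinant, finite version): Let X, Y be finite sets, W, W̃ : X × Y → ℝ matrices, and ψ_1,…,ψ_N : X → ℝ, φ_1,…,φ_N : Y → ℝ. Define φ_j^{(b)}(x) = Σ_{y∈Y} W(x,y)φ_j(y), assume the biorthogonality Σ_{x∈X} ψ_i(x)φ_j^{(b)}(x) = δ_{ij}, and define K(x₁,x₂) = Σ_{i=1}^N φ_i^{(b)}(x₁)ψ_i(x₂) and the operator W̃W^{-1}K : L²(X)→L²(X) by (W̃W^{-1}K)f = Σ_{i=1}^N ⟨ψ_i, f⟩ W̃φ_i. Then det[ ⟨W̃φ_i, ψ_j⟩_{L²(X)} ]_{i,j=1}^N = det(I − K + W̃W^{-1}K)_{L²(X)}. -/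
/-- ratio of partition functions as a determinant, finite version:
with `φ_j^{(b)}(x) = Σ_y W(x,y) φ_j(y)` biorthogonal to the `ψ_i`,
`K(x₁,x₂) = Σ_i φ_i^{(b)}(x₁) ψ_i(x₂)`, and the operator `W̃W⁻¹K` with kernel
`(x₁,x₂) ↦ Σ_i (W̃φ_i)(x₁) ψ_i(x₂)`, one has
`det[⟨W̃φ_i, ψ_j⟩] = det(I − K + W̃W⁻¹K)` over `L²(X)`. -/
theorem partition_ratio_det
    {X Y : Type*} [Fintype X] [DecidableEq X] [Fintype Y]
    {N : ℕ} (ψ : Fin N → X → ℝ) (φ : Fin N → Y → ℝ) (W Wt : X → Y → ℝ)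
    (hbi : ∀ i j, ∑ x : X, ψ i x * (∑ y : Y, W x y * φ j y)
      = if i = j then (1 : ℝ) else 0) :
    Matrix.det (Matrix.of fun i j : Fin N =>
        ∑ x : X, (∑ y : Y, Wt x y * φ i y) * ψ j x)
      = (1 - (Matrix.of fun x₁ x₂ : X => ∑ i, (∑ y : Y, W x₁ y * φ i y) * ψ i x₂)
          + (Matrix.of fun x₁ x₂ : X =>
              ∑ i, (∑ y : Y, Wt x₁ y * φ i y) * ψ i x₂)).det := by
  set A : Matrix X (Fin N) ℝ := Matrix.of fun x i => ∑ y : Y, W x y * φ i y with hA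
  set C : Matrix X (Fin N) ℝ := Matrix.of fun x i => ∑ y : Y, Wt x y * φ i y with hC
  set B : Matrix (Fin N) X ℝ := Matrix.of fun i x => ψ i x with hB
  have hBA : B * A = 1 := by
    ext i j
    simp [Matrix.mul_apply, Matrix.one_apply, hA, hB, hbi i j]
  have hK : (Matrix.of fun x₁ x₂ : X => ∑ i, (∑ y : Y, W x₁ y * φ i y) * ψ i x₂)
      = A * B := by
    ext x₁ x₂; simp [Matrix.mul_apply, hA, hB]
  have hKt : (Matrix.of fun x₁ x₂ : X => ∑ i, (∑ y : Y, Wt x₁ y * φ i y) * ψ i x₂)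
      = C * B := by
    ext x₁ x₂; simp [Matrix.mul_apply, hC, hB]
  have hL : (Matrix.of fun i j : Fin N =>
      ∑ x : X, (∑ y : Y, Wt x y * φ i y) * ψ j x) = Matrix.transpose (B * C) := by
    ext i j
    simp only [Matrix.mul_apply, Matrix.transpose_apply, Matrix.of_apply, hB, hC]
    exact Finset.sum_congr rfl fun x _ => mul_comm _ _
  rw [hL, Matrix.det_transpose, hK, hKt]
  have : (1 : Matrix X X ℝ) - A * B + C * B = 1 + (C - A) * B := by
    rw [Matrix.sub_mul]; abel
  rw [this, Matrix.det_one_add_mul_comm, Matrix.mul_sub, hBA]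
  congr 1
  abel
end

section
/- Telescoping lemma (Lemma 3.3 of the paper, finite-dimensional version, case i = 1): Let W_{i,j} (1 ≤ i ≤ j ≤ n) be linear operators on a finite-dimensional space satisfying the semigroup property W_{i,j}W_{j,k} = W_{i,k} for i ≤ j ≤ k (with W_{i,i} = I), let K₁ be an operator, and assume operators W_{j,1}K₁ (j ≥ 1) with W_{i,j}(W_{j,1}K₁) = W_{i,1}K₁ for i ≤ j, and let Q₁,…,Q_n be arbitrary operators with Q̄_j = I − Q_j. Then K₁ − Q̄₁W_{1,2}Q̄₂ ⋯ W_{n−1,n}Q̄_n (W_{n,1}K₁) = Σ_{j=1}^{n} Σ_{k=0}^{n−j} (−1)^k Σ_{j = a₀ < a₁ < ⋯ < a_k ≤ n} W_{1,j} Q_j W_{j,a₁} Q_{a₁} ⋯ W_{a_{k−1},a_k} Q_{a_k} (W_{a_k,1}K₁). -/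
/-- The product `W_{prev,a₁} Q_{a₁} W_{a₁,a₂} Q_{a₂} ⋯ Q_{a_k} (W_{a_k,1}K₁)` along a
chain `[a₁,…,a_k]`, where `WK j` denotes the operator `W_{j,1}K₁`; for the empty chain
this is `WK prev`. -/
def chainTerm {n : ℕ} {R : Type*} [Ring R]
    (W : Fin n → Fin n → R) (Q : Fin n → R) (WK : Fin n → R) :
    Fin n → List (Fin n) → R
  | prev, [] => WK prev
  | prev, a :: rest => W prev a * Q a * chainTerm W Q WK a rest

/-- The product `W_{prev,a₁} Q̄_{a₁} ⋯ Q̄_{a_k} (W_{a_k,1}K₁)` along a chain, with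
`Q̄ = 1 - Q`. -/
def prodTerm {n : ℕ} {R : Type*} [Ring R]
    (W : Fin n → Fin n → R) (Q : Fin n → R) (WK : Fin n → R) :
    Fin n → List (Fin n) → R
  | prev, [] => WK prev
  | prev, a :: rest => W prev a * (1 - Q a) * prodTerm W Q WK a rest

lemma neg_one_pow_mul_comm {R : Type*} [Ring R] (c : ℕ) (x y : R) :
    x * ((-1) ^ c * y) = (-1) ^ c * (x * y) := by
  rcases Nat.even_or_odd c with h | h
  · rw [h.neg_one_pow]; simp
  · rw [h.neg_one_pow]; simp [mul_neg, neg_mul]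

lemma chainTerm_collapse {n : ℕ} {R : Type*} [Ring R]
    (W : Fin n → Fin n → R) (Q : Fin n → R) (WK : Fin n → R)
    (hsemi : ∀ i j k : Fin n, i ≤ j → j ≤ k → W i j * W j k = W i k)
    (hWK : ∀ i j : Fin n, i ≤ j → W i j * WK j = WK i)
    {prev a : Fin n} {S : List (Fin n)} (hpa : prev ≤ a) (hS : ∀ b ∈ S, a ≤ b) :
    W prev a * chainTerm W Q WK a S = chainTerm W Q WK prev S := by
  cases S with
  | nil => simpa [chainTerm] using hWK prev a hpa
  | cons b rest =>
      simp only [chainTerm, ← mul_assoc]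
      rw [hsemi prev a b hpa (hS b (List.mem_cons_self (a := b) (l := rest)))]

lemma prodTerm_expand {n : ℕ} {R : Type*} [Ring R]
    (W : Fin n → Fin n → R) (Q : Fin n → R) (WK : Fin n → R)
    (hsemi : ∀ i j k : Fin n, i ≤ j → j ≤ k → W i j * W j k = W i k)
    (hWK : ∀ i j : Fin n, i ≤ j → W i j * WK j = WK i)
    (L : List (Fin n)) :
    ∀ prev : Fin n, L.Pairwise (· < ·) → (∀ b ∈ L, prev ≤ b) →
    prodTerm W Q WK prev L
      = ∑ T ∈ L.toFinset.powerset,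
          (-1 : R) ^ T.card * chainTerm W Q WK prev (T.sort (· ≤ ·)) := by
  induction L with
  | nil => intro prev _ _; simp [prodTerm, chainTerm]
  | cons a L ih =>
    intro prev hL hprev
    rw [List.pairwise_cons] at hL
    obtain ⟨haL, hL'⟩ := hL
    have ha : a ∉ L.toFinset := by
      simp only [List.mem_toFinset]
      intro h; exact absurd (haL a h) (lt_irrefl a)
    rw [List.toFinset_cons, Finset.sum_powerset_insert ha]
    have hIH := ih a hL' (fun b hb => (haL b hb).le)
    have e1 : ∀ T ∈ L.toFinset.powerset,
        (-1 : R) ^ T.card * chainTerm W Q WK prev (T.sort (· ≤ ·))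
          = (-1 : R) ^ T.card * (W prev a * chainTerm W Q WK a (T.sort (· ≤ ·))) := by
      intro T hT
      rw [chainTerm_collapse W Q WK hsemi hWK
        (hprev a (List.mem_cons_self (a := a) (l := L)))
        (fun b hb => by
          have hbT : b ∈ T := (Finset.mem_sort (α := Fin n) (· ≤ ·)).1 hb
          have : b ∈ L.toFinset := Finset.mem_powerset.1 hT hbT
          exact (haL b (List.mem_toFinset.1 this)).le)]
    have e2 : ∀ T ∈ L.toFinset.powerset,
        (-1 : R) ^ (insert a T).card
            * chainTerm W Q WK prev ((insert a T).sort (· ≤ ·))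
          = -((-1 : R) ^ T.card
              * (W prev a * Q a * chainTerm W Q WK a (T.sort (· ≤ ·)))) := by
      intro T hT
      have haT : a ∉ T := fun h => ha (Finset.mem_powerset.1 hT h)
      have hle : ∀ b ∈ T, a ≤ b := fun b hb =>
        (haL b (List.mem_toFinset.1 (Finset.mem_powerset.1 hT hb))).le
      rw [Finset.card_insert_of_notMem haT, Finset.sort_insert (· ≤ ·) hle haT]
      show (-1 : R) ^ (T.card + 1) * (W prev a * Q a * chainTerm W Q WK a (T.sort (· ≤ ·))) = _
      rw [pow_succ, mul_neg_one, neg_mul]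
    rw [Finset.sum_congr rfl e1, Finset.sum_congr rfl e2, Finset.sum_neg_distrib,
      ← sub_eq_add_neg]
    calc prodTerm W Q WK prev (a :: L)
        = W prev a * prodTerm W Q WK a L
            - W prev a * Q a * prodTerm W Q WK a L := by
          simp only [prodTerm]; noncomm_ring
      _ = _ := by
          rw [hIH, Finset.mul_sum, Finset.mul_sum]
          congr 1
          · exact Finset.sum_congr rfl fun T _ => neg_one_pow_mul_comm _ _ _
          · exact Finset.sum_congr rfl fun T _ => neg_one_pow_mul_comm _ _ _

lemma prodTerm_map {m n : ℕ} {R : Type*} [Ring R]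
    (W : Fin n → Fin n → R) (Q : Fin n → R) (WK : Fin n → R)
    (f : Fin m → Fin n) (l : List (Fin m)) :
    ∀ prev : Fin m, prodTerm W Q WK (f prev) (l.map f)
      = prodTerm (fun i j => W (f i) (f j)) (fun i => Q (f i)) (fun i => WK (f i)) prev l := by
  induction l with
  | nil => intro prev; simp [prodTerm]
  | cons a l ih => intro prev; simp [prodTerm, ih a]

lemma prodTerm_finRange (n : ℕ) {R : Type*} [Ring R]
    (W : Fin (n + 1) → Fin (n + 1) → R) (Q : Fin (n + 1) → R) (WK : Fin (n + 1) → R) :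
    prodTerm W Q WK 0 ((List.finRange n).map Fin.succ)
      = ((List.finRange n).map
          (fun i : Fin n => W i.castSucc i.succ * (1 - Q i.succ))).prod * WK (Fin.last n) := by
  induction n with
  | zero => simp [prodTerm]
  | succ n ih =>
    rw [List.finRange_succ]
    simp only [List.map_cons, List.map_map, List.prod_cons, prodTerm]
    have hmap : (List.finRange n).map (Fin.succ ∘ Fin.succ)
        = ((List.finRange n).map Fin.succ).map Fin.succ := by
      rw [List.map_map]
    rw [hmap]
    have h0 : (Fin.succ (0 : Fin (n + 1))) = (0 : Fin (n + 1)).succ := rfl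
    rw [show (Fin.succ (0 : Fin (n + 1))) = Fin.succ (0 : Fin (n + 1)) from rfl]
    rw [prodTerm_map W Q WK Fin.succ ((List.finRange n).map Fin.succ) 0]
    rw [ih (fun i j => W i.succ j.succ) (fun i => Q i.succ) (fun i => WK i.succ)]
    simp only [Function.comp_def, Fin.succ_last, Fin.castSucc_zero, Fin.succ_castSucc]
    rw [← mul_assoc]

/-- telescoping lemma, finite-dimensional version, case i = 1: with
operators `W i j` (`i ≤ j`, `W i i = I`) satisfying the semigroup property, operators
`WK j = W_{j,1}K₁` satisfying `W_{i,j}(W_{j,1}K₁) = W_{i,1}K₁` for `i ≤ j` (and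
`WK 0 = K₁`), and arbitrary operators `Q_j` with `Q̄_j = I − Q_j`:
`K₁ − Q̄₁W_{1,2}Q̄₂ ⋯ W_{n−1,n}Q̄_n (W_{n,1}K₁)
  = Σ_j Σ_k (−1)^k Σ_{j=a₀<a₁<⋯<a_k≤n} W_{1,j} Q_j W_{j,a₁} Q_{a₁} ⋯ Q_{a_k} (W_{a_k,1}K₁)`,
where the inner chains are encoded by subsets `S ⊆ {j+1,…,n}`. -/
theorem telescoping_lemma
    {H : Type*} [AddCommGroup H] [Module ℝ H] [FiniteDimensional ℝ H] {N : ℕ}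
    (W : Fin (N + 1) → Fin (N + 1) → Module.End ℝ H)
    (K₁ : Module.End ℝ H)
    (WK : Fin (N + 1) → Module.End ℝ H)
    (Q : Fin (N + 1) → Module.End ℝ H)
    (hWrefl : ∀ i, W i i = 1)
    (hsemi : ∀ i j k : Fin (N + 1), i ≤ j → j ≤ k → W i j * W j k = W i k)
    (hWK0 : WK 0 = K₁)
    (hWK : ∀ i j : Fin (N + 1), i ≤ j → W i j * WK j = WK i) :
    K₁ - (1 - Q 0) *
        ((List.finRange N).map
          (fun i : Fin N => W i.castSucc i.succ * (1 - Q i.succ))).prod *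
        WK (Fin.last N)
      = ∑ j : Fin (N + 1), ∑ S ∈ (Finset.Ioi j).powerset,
          (-1 : Module.End ℝ H) ^ S.card *
            (W 0 j * Q j * chainTerm W Q WK j (S.sort (· ≤ ·))) := by
  classical
  set G : Finset (Fin (N + 1)) → Module.End ℝ H :=
    fun T => (-1 : Module.End ℝ H) ^ T.card * chainTerm W Q WK 0 (T.sort (· ≤ ·)) with hG
  have key : (1 - Q 0) * ((List.finRange N).map
        (fun i : Fin N => W i.castSucc i.succ * (1 - Q i.succ))).prod * WK (Fin.last N)
      = ∑ T ∈ (Finset.univ : Finset (Fin (N + 1))).powerset, G T := by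
    have h1 : prodTerm W Q WK 0 (List.finRange (N + 1))
        = (1 - Q 0) * prodTerm W Q WK 0 ((List.finRange N).map Fin.succ) := by
      rw [List.finRange_succ]
      simp [prodTerm, hWrefl]
    rw [mul_assoc, ← prodTerm_finRange, ← h1,
      prodTerm_expand W Q WK hsemi hWK _ 0 (List.pairwise_lt_finRange (N + 1))
        (fun b _ => Fin.zero_le b), List.toFinset_finRange]
  rw [key]
  have hmem : (∅ : Finset (Fin (N + 1))) ∈ (Finset.univ : Finset (Fin (N + 1))).powerset := by
    simp
  rw [← Finset.sum_erase_add _ _ hmem]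
  have hGe : G ∅ = K₁ := by simp [hG, chainTerm, hWK0]
  rw [hGe, sub_add_eq_sub_sub, sub_sub_cancel_left, ← Finset.sum_neg_distrib,
    Finset.sum_sigma']
  refine Eq.symm (Finset.sum_bij'
    (i := fun p (_ : p ∈ (Finset.univ : Finset (Fin (N+1))).sigma
      fun j => (Finset.Ioi j).powerset) => insert p.1 p.2)
    (j := fun T hT => ⟨T.min' (Finset.nonempty_iff_ne_empty.2 (Finset.mem_erase.1 hT).1),
      T.erase (T.min' (Finset.nonempty_iff_ne_empty.2 (Finset.mem_erase.1 hT).1))⟩)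
    ?_ ?_ ?_ ?_ ?_)
  · intro p hp
    rw [Finset.mem_sigma] at hp
    refine Finset.mem_erase.2 ⟨?_, Finset.mem_powerset.2 (Finset.subset_univ _)⟩
    exact Finset.nonempty_iff_ne_empty.1 ⟨p.1, Finset.mem_insert_self _ _⟩
  · intro T hT
    rw [Finset.mem_sigma]
    refine ⟨Finset.mem_univ _, Finset.mem_powerset.2 ?_⟩
    intro b hb
    rw [Finset.mem_erase] at hb
    exact Finset.mem_Ioi.2 (lt_of_le_of_ne (Finset.min'_le _ _ hb.2) (Ne.symm hb.1))
  · rintro ⟨j, S⟩ hp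
    rw [Finset.mem_sigma] at hp
    have hS : S ⊆ Finset.Ioi j := Finset.mem_powerset.1 hp.2
    have hjS : j ∉ S := fun h => lt_irrefl j (Finset.mem_Ioi.1 (hS h))
    have hmin : (insert j S).min' ⟨j, Finset.mem_insert_self _ _⟩ = j := by
      refine le_antisymm (Finset.min'_le _ _ (Finset.mem_insert_self _ _)) ?_
      have := Finset.min'_mem (insert j S) ⟨j, Finset.mem_insert_self _ _⟩
      rcases Finset.mem_insert.1 this with h | h
      · exact h.ge
      · exact (Finset.mem_Ioi.1 (hS h)).le
    have herase : (insert j S).erase j = S := Finset.erase_insert hjS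
    simp only [hmin, herase]
  · intro T hT
    exact Finset.insert_erase
      (T.min'_mem (Finset.nonempty_iff_ne_empty.2 (Finset.mem_erase.1 hT).1))
  · rintro ⟨j, S⟩ hp
    rw [Finset.mem_sigma] at hp
    have hS : S ⊆ Finset.Ioi j := Finset.mem_powerset.1 hp.2
    have hjS : j ∉ S := fun h => lt_irrefl j (Finset.mem_Ioi.1 (hS h))
    have hle : ∀ b ∈ S, j ≤ b := fun b hb => (Finset.mem_Ioi.1 (hS hb)).le
    simp only [hG]
    rw [Finset.card_insert_of_notMem hjS, Finset.sort_insert (· ≤ ·) hle hjS]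
    show _ = -((-1 : Module.End ℝ H) ^ (S.card + 1)
      * (W 0 j * Q j * chainTerm W Q WK j (S.sort (· ≤ ·))))
    rw [pow_succ, mul_neg_one, neg_mul, neg_neg]
end

section
/- Airy function pointwise bounds: there is a constant c > 0 such that |Ai(x)| ≤ c e^{−(2/3) x^{3/2}} for all x ≥ 0, and |Ai(x)| ≤ c |x|^{−1/4} for all x < 0. -/
/-!
For `x ≥ 0` this is a comparison argument: `φ x = exp (-(2/3) x^{3/2})` satisfies
`φ'' = x φ - φ / (2√x) ≤ x φ`, so with `C = |Ai 1| / φ 1`, `C φ ∓ Ai` is a supersolution of the Airy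
equation on `[1, ∞)` that is nonnegative at `1` and tends to `0`. It cannot have a negative
minimum, since a supersolution is strictly concave wherever it is negative.

For `x < 0` write `s = √(-x)`, `u = Ai x`, `v = Ai' x`. Along solutions the corrected
Liouville–Green energy `E = s u² + v² / s - u v / (2 s³)` has derivative `-3 u v / (4 s⁵)`, which
the weight `exp (1 / (3 s³))` compensates: `exp (1 / (3 s³)) E` is nondecreasing on `(-∞, -1]`.
As `s u² ≤ (4/3) E` for `s ≥ 1`, this gives `u² ≤ K / √|x|`.

On the remaining compact intervals both bounds follow from continuity.
-/

open Real Filter Set Topology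

theorem exists_isMinOn_Ici_of_tendsto {d : ℝ → ℝ} {a m : ℝ} (hcont : ContinuousOn d (Ici a))
    (hlim : Tendsto d atTop (𝓝 0)) (hm : m ∈ Ici a) (hdm : d m < 0) :
    ∃ p ∈ Ici a, IsMinOn d (Ici a) p := by
  refine hcont.exists_isMinOn' isClosed_Ici hm ?_
  rw [cocompact_eq_atBot_atTop, inf_sup_right, eventually_sup]
  constructor
  · rw [inf_principal_eq_bot.2 ?_]
    · exact eventually_bot
    · exact mem_atBot_sets.2 ⟨a - 1, fun x hx hxa => by simp only [mem_Ici] at hxa; linarith⟩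
  · exact (hlim.eventually (eventually_ge_nhds hdm)).filter_mono inf_le_left

theorem nonneg_of_tendsto_zero_of_deriv2_neg {d : ℝ → ℝ} {a : ℝ}
    (hcont : ContinuousOn d (Ici a)) (hconc : ∀ x > a, d x < 0 → deriv^[2] d x < 0)
    (ha : 0 ≤ d a) (hlim : Tendsto d atTop (𝓝 0)) {x : ℝ} (hx : a ≤ x) : 0 ≤ d x := by
  by_contra! hdx
  obtain ⟨p, hp, hmin⟩ := exists_isMinOn_Ici_of_tendsto hcont hlim hx hdx
  have hdp : d p < 0 := (hmin hx).trans_lt hdx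
  have hap : a < p := lt_of_le_of_ne hp (by rintro rfl; linarith)
  have hnear : ∀ᶠ y in 𝓝 p, a < y ∧ d y < 0 :=
    (eventually_gt_nhds hap).and
      ((hcont.continuousAt (Ici_mem_nhds hap)).eventually (eventually_lt_nhds hdp))
  obtain ⟨δ, hδ, hsub⟩ := (nhds_basis_Icc_pos p).eventually_iff.1 hnear
  have hstrict : StrictConcaveOn ℝ (Icc (p - δ) (p + δ)) d :=
    strictConcaveOn_of_deriv2_neg (convex_Icc _ _)
      (hcont.mono fun y hy => (hsub hy).1.le)
      fun y hy => hconc y (hsub (interior_subset hy)).1 (hsub (interior_subset hy)).2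
  have hmid := hstrict.2 (show p - δ ∈ Icc (p - δ) (p + δ) by constructor <;> linarith)
    (show p + δ ∈ Icc (p - δ) (p + δ) by constructor <;> linarith) (by linarith)
    (show (0 : ℝ) < 1 / 2 by norm_num) (show (0 : ℝ) < 1 / 2 by norm_num) (by norm_num)
  have hleft : d p ≤ d (p - δ) := hmin (hsub ⟨le_rfl, by linarith⟩).1.le
  have hright : d p ≤ d (p + δ) := hmin (hsub ⟨by linarith, le_rfl⟩).1.le
  simp only [smul_eq_mul] at hmid
  rw [show (1 / 2 : ℝ) * (p - δ) + 1 / 2 * (p + δ) = p by ring] at hmid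
  linarith

theorem exists_pos_abs_le_mul_of_abs_le_of_le {f w : ℝ → ℝ} {s t : Set ℝ} {C M m : ℝ}
    (hm : 0 < m) (hs : ∀ x ∈ s, |f x| ≤ C * w x) (hws : ∀ x ∈ s, 0 ≤ w x)
    (ht : ∀ x ∈ t, |f x| ≤ M) (hwt : ∀ x ∈ t, m ≤ w x) :
    ∃ c > 0, ∀ x ∈ s ∪ t, |f x| ≤ c * w x := by
  refine ⟨max (max C (M / m)) 1, by positivity, ?_⟩
  rintro x (hx | hx)
  · exact (hs x hx).trans
      (mul_le_mul_of_nonneg_right ((le_max_left _ _).trans (le_max_left _ _)) (hws x hx))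
  · have hM : 0 ≤ M / m := div_nonneg ((abs_nonneg _).trans (ht x hx)) hm.le
    calc |f x| ≤ M := ht x hx
      _ = M / m * m := (div_mul_cancel₀ M hm.ne').symm
      _ ≤ M / m * w x := mul_le_mul_of_nonneg_left (hwt x hx) hM
      _ ≤ max (max C (M / m)) 1 * w x :=
        mul_le_mul_of_nonneg_right ((le_max_right _ _).trans (le_max_left _ _))
          (hm.le.trans (hwt x hx))

theorem abs_le_sqrt_mul_rpow_of_sqrt_mul_sq_le {t u K : ℝ} (ht : 0 < t) (h : √t * u ^ 2 ≤ K) :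
    |u| ≤ √K * t ^ (-(1 : ℝ) / 4) := by
  have hw : (t ^ (-(1 : ℝ) / 4)) ^ 2 * √t = 1 := by
    rw [← rpow_natCast, ← rpow_mul ht.le, sqrt_eq_rpow, ← rpow_add ht]
    norm_num
  have hu : u ^ 2 ≤ K * (t ^ (-(1 : ℝ) / 4)) ^ 2 :=
    calc u ^ 2 = (t ^ (-(1 : ℝ) / 4)) ^ 2 * (√t * u ^ 2) := by linear_combination -u ^ 2 * hw
      _ ≤ (t ^ (-(1 : ℝ) / 4)) ^ 2 * K := by gcongr
      _ = K * (t ^ (-(1 : ℝ) / 4)) ^ 2 := mul_comm _ _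
  calc |u| ≤ √(K * (t ^ (-(1 : ℝ) / 4)) ^ 2) := abs_le_sqrt hu
    _ = √K * t ^ (-(1 : ℝ) / 4) := by
      rw [sqrt_mul' _ (sq_nonneg _), sqrt_sq (rpow_nonneg ht.le _)]

theorem hasDerivAt_sqrt_neg {x : ℝ} (hx : x < 0) :
    HasDerivAt (fun x => √(-x)) (-1 / (2 * √(-x))) x := by
  refine ((hasDerivAt_sqrt (neg_ne_zero.2 hx.ne)).comp x (hasDerivAt_neg x)).congr_deriv ?_
  ring

structure IsAirySolution (y y' : ℝ → ℝ) : Prop where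
  hasDerivAt : ∀ x, HasDerivAt y (y' x) x
  hasDerivAt_deriv : ∀ x, HasDerivAt y' (x * y x) x

theorem isAirySolution_of_contDiff {y : ℝ → ℝ} (hy : ContDiff ℝ 2 y)
    (hode : ∀ x, deriv (deriv y) x = x * y x) : IsAirySolution y (deriv y) where
  hasDerivAt x := (hy.differentiable (by norm_num) x).hasDerivAt
  hasDerivAt_deriv x := hode x ▸
    ((hy.iterate_deriv' 1 1).differentiable (by norm_num) x).hasDerivAt

namespace IsAirySolution

variable {y y' : ℝ → ℝ}

theorem neg (hy : IsAirySolution y y') : IsAirySolution (-y) (-y') where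
  hasDerivAt x := (hy.hasDerivAt x).neg
  hasDerivAt_deriv x := by simpa using (hy.hasDerivAt_deriv x).neg

theorem continuous (hy : IsAirySolution y y') : Continuous y :=
  continuous_iff_continuousAt.2 fun x => (hy.hasDerivAt x).continuousAt

end IsAirySolution

noncomputable def airyDecay (x : ℝ) : ℝ := exp (-(2 / 3) * x ^ ((3 : ℝ) / 2))

theorem airyDecay_pos (x : ℝ) : 0 < airyDecay x := exp_pos _

theorem hasDerivAt_airyDecay (x : ℝ) : HasDerivAt airyDecay (-√x * airyDecay x) x := by
  have h := ((hasDerivAt_rpow_const (x := x) (p := 3 / 2) (Or.inr (by norm_num))).const_mul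
    (-(2 / 3))).exp
  refine h.congr_deriv ?_
  rw [sqrt_eq_rpow, airyDecay]
  norm_num
  ring

theorem continuous_airyDecay : Continuous airyDecay :=
  continuous_iff_continuousAt.2 fun x => (hasDerivAt_airyDecay x).continuousAt

theorem deriv_airyDecay : deriv airyDecay = fun x => -√x * airyDecay x :=
  funext fun x => (hasDerivAt_airyDecay x).deriv

theorem hasDerivAt_deriv_airyDecay {x : ℝ} (hx : 0 < x) :
    HasDerivAt (deriv airyDecay) (x * airyDecay x - airyDecay x / (2 * √x)) x := by
  rw [deriv_airyDecay]
  refine ((hasDerivAt_sqrt hx.ne').neg.mul (hasDerivAt_airyDecay x)).congr_deriv ?_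
  have hsq : √x * √x = x := mul_self_sqrt hx.le
  have hs : √x ≠ 0 := (sqrt_pos.2 hx).ne'
  simp only [Pi.neg_apply]
  field_simp
  linear_combination 2 * airyDecay x * √x * hsq

theorem tendsto_airyDecay_atTop : Tendsto airyDecay atTop (𝓝 0) :=
  tendsto_exp_atBot.comp ((tendsto_rpow_atTop (by norm_num)).const_mul_atTop_of_neg (by norm_num))

theorem airyDecay_antitoneOn : AntitoneOn airyDecay (Ici 0) := fun x hx y _ hxy =>
  exp_le_exp.2 (by have := rpow_le_rpow hx hxy (show (0 : ℝ) ≤ 3 / 2 by norm_num); linarith)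

noncomputable def airyEnergy (s u v : ℝ) : ℝ := s * u ^ 2 + v ^ 2 / s - u * v / (2 * s ^ 3)

theorem mul_sq_le_airyEnergy {s : ℝ} (hs : 1 ≤ s) (u v : ℝ) :
    s * u ^ 2 ≤ 4 / 3 * airyEnergy s u v := by
  have key : 0 ≤ s ^ 4 * u ^ 2 + 4 * s ^ 2 * v ^ 2 - 2 * u * v := by
    nlinarith [sq_nonneg (u - v), mul_nonneg (sub_nonneg.2 (one_le_pow₀ (n := 4) hs)) (sq_nonneg u),
      mul_nonneg (sub_nonneg.2 (one_le_pow₀ (n := 2) hs)) (sq_nonneg v)]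
  have : 4 / 3 * airyEnergy s u v - s * u ^ 2 =
      (s ^ 4 * u ^ 2 + 4 * s ^ 2 * v ^ 2 - 2 * u * v) / (3 * s ^ 3) := by
    have : s ≠ 0 := by positivity
    unfold airyEnergy
    field_simp
    ring
  linarith [div_nonneg key (by positivity : (0 : ℝ) ≤ 3 * s ^ 3)]

theorem airyEnergy_nonneg {s : ℝ} (hs : 1 ≤ s) (u v : ℝ) : 0 ≤ airyEnergy s u v := by
  nlinarith [mul_sq_le_airyEnergy hs u v, mul_nonneg (zero_le_one.trans hs) (sq_nonneg u)]

theorem mul_le_airyEnergy {s : ℝ} (hs : 1 ≤ s) (u v : ℝ) :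
    3 * (u * v) ≤ 2 * airyEnergy s u v := by
  have hs3 : 1 ≤ s ^ 3 := one_le_pow₀ hs
  -- AM-GM: `2 s⁴ u² + 2 s² v² ≥ 4 s³ |u v| ≥ (1 + 3 s³) |u v|`
  have key : 0 ≤ 2 * s ^ 4 * u ^ 2 + 2 * s ^ 2 * v ^ 2 - u * v - 3 * (u * v) * s ^ 3 := by
    nlinarith [mul_nonneg (sq_nonneg (s * u - v)) (show (0 : ℝ) ≤ 1 + 3 * s ^ 3 by positivity),
      mul_nonneg (sub_nonneg.2 hs3) (show (0 : ℝ) ≤ s ^ 2 * u ^ 2 + v ^ 2 by positivity)]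
  have : 2 * airyEnergy s u v - 3 * (u * v) =
      (2 * s ^ 4 * u ^ 2 + 2 * s ^ 2 * v ^ 2 - u * v - 3 * (u * v) * s ^ 3) / s ^ 3 := by
    have : s ≠ 0 := by positivity
    unfold airyEnergy
    field_simp
  linarith [div_nonneg key (by positivity : (0 : ℝ) ≤ s ^ 3)]

noncomputable def airyLyapunov (y y' : ℝ → ℝ) (x : ℝ) : ℝ :=
  exp (1 / (3 * √(-x) ^ 3)) * airyEnergy (√(-x)) (y x) (y' x)

namespace IsAirySolution

variable {y y' : ℝ → ℝ}

theorem le_mul_airyDecay (hy : IsAirySolution y y') (hlim : Tendsto y atTop (𝓝 0)) {a C : ℝ}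
    (ha : 0 < a) (hC : 0 ≤ C) (hya : y a ≤ C * airyDecay a) {x : ℝ} (hx : a ≤ x) :
    y x ≤ C * airyDecay x := by
  set d := fun x => C * airyDecay x - y x with hd
  have hd' : deriv d = fun x => C * deriv airyDecay x - y' x :=
    funext fun x => (((hasDerivAt_airyDecay x).const_mul C).sub (hy.hasDerivAt x)).deriv.trans
      (by rw [deriv_airyDecay])
  have hd'' : ∀ x > 0,
      deriv^[2] d x = C * (x * airyDecay x - airyDecay x / (2 * √x)) - x * y x := fun x hx => by
    rw [Function.iterate_succ_apply, Function.iterate_one, hd']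
    exact (((hasDerivAt_deriv_airyDecay hx).const_mul C).sub (hy.hasDerivAt_deriv x)).deriv
  have hconc : ∀ x > a, d x < 0 → deriv^[2] d x < 0 := fun x hxa hdx => by
    have hx0 : 0 < x := ha.trans hxa
    have hcorr : 0 ≤ C * (airyDecay x / (2 * √x)) := by have := airyDecay_pos x; positivity
    have : x * d x < 0 := mul_neg_of_pos_of_neg hx0 hdx
    rw [hd'' x hx0]
    simp only [hd] at this
    linarith
  have hdlim : Tendsto d atTop (𝓝 0) := by
    simpa using (tendsto_airyDecay_atTop.const_mul C).sub hlim
  have := nonneg_of_tendsto_zero_of_deriv2_neg (d := d)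
    ((continuous_const.mul continuous_airyDecay).sub hy.continuous).continuousOn hconc
    (by simp only [hd]; linarith) hdlim hx
  simp only [hd] at this
  linarith

theorem abs_le_mul_airyDecay (hy : IsAirySolution y y') (hlim : Tendsto y atTop (𝓝 0)) {a : ℝ}
    (ha : 0 < a) {x : ℝ} (hx : a ≤ x) : |y x| ≤ |y a| / airyDecay a * airyDecay x := by
  have hC : 0 ≤ |y a| / airyDecay a := div_nonneg (abs_nonneg _) (airyDecay_pos a).le
  have hCa : |y a| / airyDecay a * airyDecay a = |y a| := div_mul_cancel₀ _ (airyDecay_pos a).ne'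
  refine abs_le.2 ⟨?_, hy.le_mul_airyDecay hlim ha hC (by rw [hCa]; exact le_abs_self _) hx⟩
  have := hy.neg.le_mul_airyDecay (by rw [← neg_zero]; exact hlim.neg) ha hC
    (by rw [hCa]; exact neg_le_abs _) hx
  simp only [Pi.neg_apply] at this
  linarith

theorem exists_abs_le_mul_airyDecay (hy : IsAirySolution y y') (hlim : Tendsto y atTop (𝓝 0)) :
    ∃ c > 0, ∀ x : ℝ, 0 ≤ x → |y x| ≤ c * airyDecay x := by
  obtain ⟨M, hM⟩ := isCompact_Icc.exists_bound_of_continuousOn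
    (hy.continuous.continuousOn (s := Icc 0 1))
  obtain ⟨c, hc, hbound⟩ := exists_pos_abs_le_mul_of_abs_le_of_le (airyDecay_pos 1)
    (s := Ici 1) (t := Icc 0 1) (fun x hx => hy.abs_le_mul_airyDecay hlim one_pos hx)
    (fun x _ => (airyDecay_pos x).le) (fun x hx => by simpa using hM x hx)
    (fun x hx => airyDecay_antitoneOn hx.1 (mem_Ici.2 zero_le_one) hx.2)
  exact ⟨c, hc, fun x hx => hbound x ((le_total 1 x).imp id fun h => ⟨hx, h⟩)⟩

theorem hasDerivAt_airyEnergy (hy : IsAirySolution y y') {x : ℝ} (hx : x < 0) :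
    HasDerivAt (fun x => airyEnergy (√(-x)) (y x) (y' x))
      (-(3 / (4 * √(-x) ^ 5)) * (y x * y' x)) x := by
  have hs : 0 < √(-x) := sqrt_pos.2 (neg_pos.2 hx)
  have hS := hasDerivAt_sqrt_neg hx
  have hU := hy.hasDerivAt x
  have hV := hy.hasDerivAt_deriv x
  have hden : 2 * √(-x) ^ 3 ≠ 0 := by positivity
  refine (((hS.mul (hU.pow 2)).add ((hV.pow 2).div hS hs.ne')).sub
    ((hU.mul hV).div ((hS.pow 3).const_mul 2) hden)).congr_deriv ?_
  simp only [Pi.pow_apply, Pi.mul_apply]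
  have hxs : x = -√(-x) ^ 2 := by rw [sq_sqrt (neg_nonneg.2 hx.le)]; ring
  generalize √(-x) = s at hs hxs ⊢
  subst hxs
  field_simp
  ring

theorem hasDerivAt_airyLyapunov (hy : IsAirySolution y y') {x : ℝ} (hx : x < 0) :
    HasDerivAt (airyLyapunov y y') (exp (1 / (3 * √(-x) ^ 3)) *
      ((2 * airyEnergy (√(-x)) (y x) (y' x) - 3 * (y x * y' x)) / (4 * √(-x) ^ 5))) x := by
  have hs : 0 < √(-x) := sqrt_pos.2 (neg_pos.2 hx)
  have hweight : HasDerivAt (fun x => 1 / (3 * √(-x) ^ 3)) (1 / (2 * √(-x) ^ 5)) x := by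
    refine ((hasDerivAt_const x (1 : ℝ)).div (((hasDerivAt_sqrt_neg hx).pow 3).const_mul 3)
      (by simp only [Pi.pow_apply]; positivity)).congr_deriv ?_
    simp only [Pi.pow_apply]
    field_simp
    ring
  refine (hweight.exp.mul (hy.hasDerivAt_airyEnergy hx)).congr_deriv ?_
  field_simp
  ring

theorem monotoneOn_airyLyapunov (hy : IsAirySolution y y') :
    MonotoneOn (airyLyapunov y y') (Iic (-1)) := by
  have hderiv (x : ℝ) (hx : x ∈ Iic (-1)) := hy.hasDerivAt_airyLyapunov (x := x)
    (by linarith [mem_Iic.1 hx])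
  refine monotoneOn_of_hasDerivWithinAt_nonneg (convex_Iic _)
    (fun x hx => (hderiv x hx).continuousAt.continuousWithinAt)
    (fun x hx => (hderiv x (interior_subset hx)).hasDerivWithinAt) fun x hx => ?_
  rw [interior_Iic] at hx
  have hs : 1 ≤ √(-x) := one_le_sqrt.2 (by linarith [mem_Iio.1 hx])
  have := mul_le_airyEnergy hs (y x) (y' x)
  exact mul_nonneg (exp_pos _).le (div_nonneg (by linarith) (by positivity))

theorem sqrt_neg_mul_sq_le_airyLyapunov (hy : IsAirySolution y y') {x : ℝ} (hx : x ≤ -1) :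
    √(-x) * y x ^ 2 ≤ 4 / 3 * airyLyapunov y y' (-1) := by
  have hs : 1 ≤ √(-x) := one_le_sqrt.2 (by linarith)
  calc √(-x) * y x ^ 2 ≤ 4 / 3 * airyEnergy (√(-x)) (y x) (y' x) := mul_sq_le_airyEnergy hs _ _
    _ ≤ 4 / 3 * airyLyapunov y y' x := by
      gcongr
      exact le_mul_of_one_le_left (airyEnergy_nonneg hs _ _) (one_le_exp (by positivity))
    _ ≤ 4 / 3 * airyLyapunov y y' (-1) := by
      gcongr
      exact hy.monotoneOn_airyLyapunov hx (mem_Iic.2 le_rfl) hx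

theorem exists_abs_le_mul_rpow (hy : IsAirySolution y y') :
    ∃ c > 0, ∀ x : ℝ, x < 0 → |y x| ≤ c * |x| ^ (-(1 : ℝ) / 4) := by
  obtain ⟨M, hM⟩ := isCompact_Icc.exists_bound_of_continuousOn
    (hy.continuous.continuousOn (s := Icc (-1) 0))
  obtain ⟨c, hc, hbound⟩ := exists_pos_abs_le_mul_of_abs_le_of_le one_pos
    (f := y) (w := fun x => |x| ^ (-(1 : ℝ) / 4)) (s := Iic (-1)) (t := Ico (-1) 0)
    (fun x (hx : x ≤ -1) => by
      rw [abs_of_neg (by linarith : x < 0)]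
      exact abs_le_sqrt_mul_rpow_of_sqrt_mul_sq_le (by linarith)
        (hy.sqrt_neg_mul_sq_le_airyLyapunov hx))
    (fun x _ => rpow_nonneg (abs_nonneg x) _)
    (fun x hx => by simpa using hM x (Ico_subset_Icc_self hx))
    (fun x hx => one_le_rpow_of_pos_of_le_one_of_nonpos (abs_pos.2 hx.2.ne)
      (by rw [abs_of_neg hx.2]; linarith [hx.1]) (by norm_num))
  exact ⟨c, hc, fun x hx => hbound x ((le_or_gt x (-1)).imp id fun h => ⟨h.le, hx⟩)⟩

end IsAirySolution

theorem airy_pointwise_bounds_general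
    (Ai : ℝ → ℝ) (hAi : ContDiff ℝ 2 Ai)
    (hODE : ∀ x, deriv (deriv Ai) x = x * Ai x)
    (hdecay : Filter.Tendsto Ai Filter.atTop (nhds 0)) :
    ∃ c > 0, (∀ x : ℝ, 0 ≤ x → |Ai x| ≤ c * Real.exp (-(2 / 3) * x ^ ((3 : ℝ) / 2))) ∧
      ∀ x : ℝ, x < 0 → |Ai x| ≤ c * |x| ^ (-(1 : ℝ) / 4) := by
  have hsol := isAirySolution_of_contDiff hAi hODE
  obtain ⟨c₁, hc₁, hpos⟩ := hsol.exists_abs_le_mul_airyDecay hdecay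
  obtain ⟨c₂, hc₂, hneg⟩ := hsol.exists_abs_le_mul_rpow
  refine ⟨max c₁ c₂, lt_max_of_lt_left hc₁, fun x hx => ?_, fun x hx => ?_⟩
  · exact (hpos x hx).trans (mul_le_mul_of_nonneg_right (le_max_left _ _) (airyDecay_pos x).le)
  · exact (hneg x hx).trans
      (mul_le_mul_of_nonneg_right (le_max_right _ _) (rpow_nonneg (abs_nonneg x) _))

/-- Airy function pointwise bounds: let `Ai` be the classical Airy
function, i.e. the (twice continuously differentiable) solution of `Ai'' = x·Ai`
decaying at `+∞`, normalized by `Ai 0 = 1/(3^{2/3} Γ(2/3))`.  Then there is `c > 0`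
with `|Ai x| ≤ c e^{−(2/3)x^{3/2}}` for `x ≥ 0` and `|Ai x| ≤ c |x|^{−1/4}` for
`x < 0`. -/
theorem airy_pointwise_bounds
    (Ai : ℝ → ℝ) (hAi : ContDiff ℝ 2 Ai)
    (hODE : ∀ x, deriv (deriv Ai) x = x * Ai x)
    (hdecay : Filter.Tendsto Ai Filter.atTop (nhds 0))
    (hnorm : Ai 0 = 1 / (3 ^ ((2 : ℝ) / 3) * Real.Gamma (2 / 3))) :
    ∃ c > 0, (∀ x : ℝ, 0 ≤ x → |Ai x| ≤ c * Real.exp (-(2 / 3) * x ^ ((3 : ℝ) / 2))) ∧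
      ∀ x : ℝ, x < 0 → |Ai x| ≤ c * |x| ^ (-(1 : ℝ) / 4) :=
  airy_pointwise_bounds_general Ai hAi hODE hdecay
end
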